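/- Let V be a subspace of a real inner product space M with r-fold vector cross product form φ of degree r+1 such that φ|_C = 0 on a subspace C. Then dim C ≤ (dim M + r - 1)/2. (Linear version: if φ restricted to C vanishes, then for any (r-1)-dimensional subspace W ⊆ C spanned by orthonormal vectors e₁,...,e_{r-1}, the 2-form ι_{e₁∧...∧e_{r-1}}φ is a nondegenerate 2-form on W^⊥ and C ∩ W^⊥ is isotropic for it.) -/

import Mathlib

/-!
Write `r = m + 1`; if `dim C ≤ m` there is nothing to prove, so pick orthonormal
`e₁, …, eₘ ∈ C` and let `W` be their span. The map `J u = χ(e₁, …, eₘ, u)` takes values in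
`Wᗮ` and, by the Gram-determinant normalisation of `χ`, is an isometry on `Wᗮ`. Since `φ`
vanishes on `C`, `J` maps `S = C ⊓ Wᗮ` into `Sᗮ`, so `S` and `J S` are orthogonal subspaces of
`Wᗮ` of equal dimension: `2 dim S ≤ dim M - m`. Together with `dim C ≤ dim S + m` this gives
`2 dim C ≤ dim M + m`.
-/

open scoped RealInnerProductSpace

open Module Submodule

section InnerProductSpace

variable {E : Type*} [NormedAddCommGroup E] [InnerProductSpace ℝ E]

theorem Matrix.det_gram_of_pairwise_inner_eq_zero {ι : Type*} [Fintype ι] [DecidableEq ι]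
    {v : ι → E} (hv : Pairwise fun i j => ⟪v i, v j⟫ = 0) :
    (Matrix.gram ℝ v).det = ∏ i, ⟪v i, v i⟫ := by
  have hdiag : Matrix.gram ℝ v = Matrix.diagonal fun i => ⟪v i, v i⟫ := by
    ext i j
    rcases eq_or_ne i j with rfl | hij
    · simp
    · simp [hij, hv hij]
  rw [hdiag, Matrix.det_diagonal]

theorem pairwise_inner_snoc_eq_zero {m : ℕ} {e : Fin m → E} {u : E}
    (he : Pairwise fun i j => ⟪e i, e j⟫ = 0) (hu : ∀ i, ⟪e i, u⟫ = 0) :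
    Pairwise fun i j =>
      ⟪(Fin.snoc e u : Fin (m + 1) → E) i, (Fin.snoc e u : Fin (m + 1) → E) j⟫ = 0 := by
  intro i j hij
  induction i using Fin.lastCases with
  | last =>
    induction j using Fin.lastCases with
    | last => exact absurd rfl hij
    | cast j => simpa [real_inner_comm] using hu j
  | cast i =>
    induction j using Fin.lastCases with
    | last => simpa using hu i
    | cast j => simpa using he (fun h => hij (congrArg Fin.castSucc h))

theorem Submodule.mem_orthogonal_span_range_iff {ι : Type*} {e : ι → E} {u : E} :
    u ∈ (span ℝ (Set.range e))ᗮ ↔ ∀ i, ⟪e i, u⟫ = 0 := by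
  refine ⟨fun hu i => inner_right_of_mem_orthogonal (subset_span (Set.mem_range_self i)) hu,
    fun hu => ?_⟩
  have hortho : span ℝ (Set.range e) ⟂ span ℝ {u} := by
    rw [isOrtho_span]
    rintro _ ⟨i, rfl⟩ _ rfl
    exact hu i
  exact hortho.symm (mem_span_singleton_self u)

theorem Submodule.exists_orthonormal_fin_of_le_finrank [FiniteDimensional ℝ E]
    (K : Submodule ℝ E) {m : ℕ} (hm : m ≤ finrank ℝ K) :
    ∃ e : Fin m → E, Orthonormal ℝ e ∧ ∀ i, e i ∈ K :=
  let b := stdOrthonormalBasis ℝ K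
  ⟨fun i => b (Fin.castLE hm i),
    (b.orthonormal.comp _ (Fin.castLE_injective hm)).comp_linearIsometry K.subtypeₗᵢ,
    fun i => (b (Fin.castLE hm i)).2⟩

theorem Submodule.finrank_le_finrank_inf_orthogonal_add [FiniteDimensional ℝ E]
    (C W : Submodule ℝ E) : finrank ℝ C ≤ finrank ℝ ↥(C ⊓ Wᗮ) + finrank ℝ W := by
  have hsup := finrank_sup_add_finrank_inf_eq C Wᗮ
  have hle := (C ⊔ Wᗮ).finrank_le
  have hW := W.finrank_add_finrank_orthogonal
  omega

theorem two_mul_finrank_le_of_injOn_orthogonal [FiniteDimensional ℝ E] {S N : Submodule ℝ E}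
    (hSN : S ≤ N) (J : E →ₗ[ℝ] E) (hJ : ∀ u ∈ S, J u ∈ Sᗮ ⊓ N)
    (hinj : ∀ u ∈ S, J u = 0 → u = 0) : 2 * finrank ℝ S ≤ finrank ℝ N := by
  have hrestrict : Function.Injective (J.restrict hJ) := by
    rw [← LinearMap.ker_eq_bot, eq_bot_iff]
    rintro ⟨u, hu⟩ h
    exact Subtype.ext (hinj u hu (congrArg Subtype.val h))
  have hS := LinearMap.finrank_le_finrank_of_injective hrestrict
  have hN := finrank_add_inf_finrank_orthogonal hSN
  omega

end InnerProductSpace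

section VectorCrossProduct

variable {M : Type*} [NormedAddCommGroup M] [InnerProductSpace ℝ M] {m : ℕ}
  (χ : AlternatingMap ℝ M M (Fin (m + 1))) {e : Fin m → M}

theorem AlternatingMap.curryRight_mem_orthogonal_span
    (hperp : ∀ (v : Fin (m + 1) → M) (i : Fin (m + 1)), ⟪χ v, v i⟫ = 0) (u : M) :
    χ.toMultilinearMap.curryRight e u ∈ (span ℝ (Set.range e))ᗮ := by
  refine mem_orthogonal_span_range_iff.2 fun i => ?_
  have h := hperp (Fin.snoc e u) i.castSucc
  rw [Fin.snoc_castSucc, real_inner_comm] at h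
  exact h

theorem AlternatingMap.inner_self_curryRight
    (hnorm : ∀ v : Fin (m + 1) → M,
      ⟪χ v, χ v⟫ = Matrix.det (Matrix.of fun i j => ⟪v i, v j⟫))
    (he : Orthonormal ℝ e) {u : M} (hu : u ∈ (span ℝ (Set.range e))ᗮ) :
    ⟪χ.toMultilinearMap.curryRight e u, χ.toMultilinearMap.curryRight e u⟫ = ⟪u, u⟫ := by
  have hpair := pairwise_inner_snoc_eq_zero (fun i j hij => he.inner_eq_zero hij)
    (mem_orthogonal_span_range_iff.1 hu)
  change ⟪χ (Fin.snoc e u), χ (Fin.snoc e u)⟫ = _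
  rw [hnorm]
  refine (Matrix.det_gram_of_pairwise_inner_eq_zero hpair).trans ?_
  simp [Fin.prod_univ_castSucc, he.1]

theorem AlternatingMap.inner_curryRight_eq_zero {C : Submodule ℝ M}
    (hvan : ∀ v : Fin (m + 2) → M, (∀ i, v i ∈ C) →
      ⟪χ (fun k => v k.castSucc), v (Fin.last (m + 1))⟫ = 0)
    (he : ∀ i, e i ∈ C) {u v : M} (hu : u ∈ C) (hv : v ∈ C) :
    ⟪χ.toMultilinearMap.curryRight e u, v⟫ = 0 := by
  have hmem : ∀ i, (Fin.snoc (Fin.snoc e u) v : Fin (m + 2) → M) i ∈ C := by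
    intro i
    induction i using Fin.lastCases with
    | last => simpa using hv
    | cast i =>
      induction i using Fin.lastCases with
      | last => simpa using hu
      | cast i => simpa using he i
  simpa using hvan _ hmem

end VectorCrossProduct

/-- Dimension bound for branes: if `M` is a finite-dimensional real inner product space
with an `r`-fold vector cross product `χ` (with associated `(r+1)`-form `φ`), and `C` is
a subspace on which `φ` vanishes identically, then `dim C ≤ (dim M + r - 1)/2`, i.e.
`2 · dim C ≤ dim M + r - 1`. -/
theorem brane_dimension_bound
    {M : Type*} [NormedAddCommGroup M] [InnerProductSpace ℝ M]
    [FiniteDimensional ℝ M] (r : ℕ) (hr : 1 ≤ r)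
    (χ : AlternatingMap ℝ M M (Fin r))
    (hperp : ∀ (v : Fin r → M) (i : Fin r), ⟪χ v, v i⟫ = 0)
    (hnorm : ∀ v : Fin r → M,
      ⟪χ v, χ v⟫ = Matrix.det (Matrix.of fun i j => ⟪v i, v j⟫))
    (C : Submodule ℝ M)
    (hvan : ∀ v : Fin (r+1) → M, (∀ i, v i ∈ C) →
      ⟪χ (fun k => v k.castSucc), v (Fin.last r)⟫ = 0) :
    2 * Module.finrank ℝ C ≤ Module.finrank ℝ M + r - 1 := by
  obtain ⟨m, rfl⟩ : ∃ m, r = m + 1 := ⟨r - 1, by omega⟩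
  rcases le_or_gt (finrank ℝ C) m with hC | hC
  · have := C.finrank_le
    omega
  obtain ⟨e, he, heC⟩ := C.exists_orthonormal_fin_of_le_finrank hC.le
  set W := span ℝ (Set.range e)
  set J := χ.toMultilinearMap.curryRight e
  have hW : finrank ℝ W = m := by
    rw [finrank_span_eq_card he.linearIndependent, Fintype.card_fin]
  have hJ : ∀ u ∈ C ⊓ Wᗮ, J u ∈ (C ⊓ Wᗮ)ᗮ ⊓ Wᗮ := fun u hu =>
    ⟨(mem_orthogonal' _ _).2 fun v hv => χ.inner_curryRight_eq_zero hvan heC hu.1 hv.1,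
      χ.curryRight_mem_orthogonal_span hperp u⟩
  have hinj : ∀ u ∈ C ⊓ Wᗮ, J u = 0 → u = 0 := fun u hu hJu => by
    rw [← inner_self_eq_zero (𝕜 := ℝ), ← χ.inner_self_curryRight hnorm he hu.2]
    simp [J, hJu]
  have hisotropic := two_mul_finrank_le_of_injOn_orthogonal inf_le_right J hJ hinj
  have hsplit := C.finrank_le_finrank_inf_orthogonal_add W
  have hWW := W.finrank_add_finrank_orthogonal
  omega
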